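/- arXiv:2503.09374 — 2 statements merged into one kernel-verified Lean document; each statement's English description precedes it below -/
import Mathlib

section
/- Let λ > 0 and s ∈ ℝᵈ. Define r = 1/(1 + √(λ/(λ + sᵀs))) and R = (1/√λ)·(I_d − r·(s sᵀ)/(λ + sᵀs)). Then R·Rᵀ = (s sᵀ + λ·I_d)⁻¹. -/
/-!
Write `P = s sᵀ` and `a = sᵀs`, so that `P² = a P`. Matrices of the form `1 - c P` are then closed
under multiplication, `(1 - b P)(1 - c P) = 1 - (b + c - b c a) P`, and Sherman–Morrison gives
`(P + λ)⁻¹ = λ⁻¹ (1 - P / (λ + a))`. Since `R` is symmetric, `R Rᵀ = λ⁻¹ (1 - c P)²` with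
`c = r / (λ + a)`, and the choice of `r` is exactly the root of `2c - c² a = 1 / (λ + a)`.
-/

open Matrix

section RankOne

variable {n K : Type*} [Fintype n]

theorem vecMulVec_self_mul_self [CommRing K] (s : n → K) :
    vecMulVec s s * vecMulVec s s = (s ⬝ᵥ s) • vecMulVec s s := by
  rw [vecMulVec_mul_vecMulVec, vecMulVec_smul]

theorem one_sub_smul_mul_one_sub_smul [DecidableEq n] [CommRing K] {P : Matrix n n K} {a : K}
    (hP : P * P = a • P) (b c : K) :
    (1 - b • P) * (1 - c • P) = 1 - (b + c - b * c * a) • P := by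
  simp only [sub_mul, mul_sub, one_mul, mul_one, Matrix.smul_mul, Matrix.mul_smul, hP, smul_smul]
  match_scalars <;> ring

theorem inv_add_smul_one_of_mul_self [DecidableEq n] [Field K] {P : Matrix n n K} {a lam : K}
    (hP : P * P = a • P) (hlam : lam ≠ 0) (hlama : lam + a ≠ 0) :
    (P + lam • 1)⁻¹ = lam⁻¹ • (1 - (lam + a)⁻¹ • P) := by
  refine inv_eq_right_inv ?_
  simp only [smul_sub, mul_sub, add_mul, Matrix.smul_mul, Matrix.mul_smul, one_mul, mul_one, hP,
    smul_smul]
  match_scalars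
  · field_simp
    ring
  · field_simp

end RankOne

-- `t = √(λ / (λ + a))`; the identity reduces to `(λ + a)(1 - t²) = a`.
theorem two_mul_sub_sq_mul_eq_inv {lam a t : ℝ} (hL : lam + a ≠ 0) (ht : 0 ≤ t)
    (ht2 : t ^ 2 * (lam + a) = lam) :
    2 * (1 / (1 + t) / (lam + a)) - (1 / (1 + t) / (lam + a)) ^ 2 * a = (lam + a)⁻¹ := by
  have h1t : 1 + t ≠ 0 := by positivity
  field_simp
  linear_combination -ht2

/-- Initialization of the square-root factor in Fisher adaptive MALA:
with `r = 1/(1 + √(λ/(λ + sᵀs)))` and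
`R = (1/√λ)(I_d − r s sᵀ/(λ + sᵀs))`, one has `R Rᵀ = (s sᵀ + λ I_d)⁻¹`. -/
theorem sqrt_factor_initialization
    {d : ℕ} (lam : ℝ) (hlam : 0 < lam) (s : Fin d → ℝ) :
    let r : ℝ := 1 / (1 + Real.sqrt (lam / (lam + s ⬝ᵥ s)))
    let R : Matrix (Fin d) (Fin d) ℝ :=
      (1 / Real.sqrt lam) • ((1 : Matrix (Fin d) (Fin d) ℝ)
        - (r / (lam + s ⬝ᵥ s)) • Matrix.vecMulVec s s)
    R * Rᵀ = (Matrix.vecMulVec s s + lam • (1 : Matrix (Fin d) (Fin d) ℝ))⁻¹ := by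
  intro r R
  have hL : 0 < lam + s ⬝ᵥ s := add_pos_of_pos_of_nonneg hlam (dotProduct_self_star_nonneg s)
  have hP := vecMulVec_self_mul_self s
  have hc : 2 * (r / (lam + s ⬝ᵥ s)) - (r / (lam + s ⬝ᵥ s)) ^ 2 * (s ⬝ᵥ s)
      = (lam + s ⬝ᵥ s)⁻¹ :=
    two_mul_sub_sq_mul_eq_inv hL.ne' (Real.sqrt_nonneg _)
      (by rw [Real.sq_sqrt (by positivity), div_mul_cancel₀ _ hL.ne'])
  have hRT : Rᵀ = R := by
    simp only [R, transpose_smul, transpose_sub, transpose_one, transpose_vecMulVec]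
  rw [hRT, inv_add_smul_one_of_mul_self hP hlam.ne' hL.ne', ← hc]
  simp only [R]
  rw [Matrix.smul_mul, Matrix.mul_smul, smul_smul, one_sub_smul_mul_one_sub_smul hP]
  congr 1
  · rw [div_mul_div_comm, one_mul, Real.mul_self_sqrt hlam.le, one_div]
  · congr 2
    ring
end

section
/- Let ℐ be a symmetric positive definite d×d real matrix and c > 0. Then for every symmetric positive semidefinite d×d real matrix M with tr(M) = c, one has tr(M ℐ M) ≥ c²/tr(ℐ⁻¹), and equality holds if and only if M = (c/tr(ℐ⁻¹))·ℐ⁻¹. In particular, the minimizer of tr(M ℐ M) over symmetric positive semidefinite matrices with trace c is proportional to the inverse Fisher matrix ℐ⁻¹. -/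
open Matrix

/-! Write `M = N + (c / τ) • 𝓘⁻¹` with `τ = tr 𝓘⁻¹`. Since `tr N = c - c = 0`, the cross terms
drop out and `tr (M 𝓘 M) = tr (Nᴴ 𝓘 N) + c² / τ`; the first summand is nonnegative and, `𝓘` being
positive definite, vanishes only for `N = 0`. -/

namespace Matrix

variable {m n : Type*} [Fintype m] [Fintype n]

open scoped ComplexOrder in
lemma PosDef.trace_conjTranspose_mul_mul_same_eq_zero_iff {𝕜 : Type*} [RCLike 𝕜]
    {A : Matrix n n 𝕜} (hA : A.PosDef) {B : Matrix n m 𝕜} :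
    (Bᴴ * A * B).trace = 0 ↔ B = 0 := by
  refine ⟨fun h ↦ ext_iff_mulVec.mpr fun x ↦ ?_, fun h ↦ by simp [h]⟩
  have hBAB : Bᴴ * A * B = 0 :=
    (hA.posSemidef.conjTranspose_mul_mul_same B).trace_eq_zero_iff.mp h
  have hquad : star (B *ᵥ x) ⬝ᵥ (A *ᵥ B *ᵥ x) = star x ⬝ᵥ ((Bᴴ * A * B) *ᵥ x) := by
    rw [star_mulVec, dotProduct_mulVec, vecMul_vecMul, ← dotProduct_mulVec, mulVec_mulVec]
  by_contra hx
  rw [zero_mulVec] at hx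
  simpa only [hquad, hBAB, zero_mulVec, dotProduct_zero, lt_irrefl] using
    hA.dotProduct_mulVec_pos hx

lemma trace_sub_smul_inv_mul_mul_sub_smul_inv {K : Type*} [Field K] [DecidableEq n]
    {I : Matrix n n K} (hI : IsUnit I.det) (M : Matrix n n K) (t : K) :
    ((M - t • I⁻¹) * I * (M - t • I⁻¹)).trace =
      (M * I * M).trace - 2 * t * M.trace + t ^ 2 * I⁻¹.trace := by
  simp only [sub_mul, mul_sub, Matrix.smul_mul, Matrix.mul_smul, Matrix.mul_assoc,
    mul_nonsing_inv _ hI, Matrix.mul_one, trace_sub, trace_smul, smul_eq_mul]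
  simp only [← Matrix.mul_assoc, nonsing_inv_mul _ hI, Matrix.one_mul]
  ring

end Matrix

theorem inverse_fisher_optimal_preconditioner_general
    {d : ℕ} (𝓘 : Matrix (Fin d) (Fin d) ℝ) (h𝓘 : 𝓘.PosDef)
    (c : ℝ) :
    ∀ M : Matrix (Fin d) (Fin d) ℝ, M.PosSemidef → M.trace = c →
      c ^ 2 / (𝓘⁻¹).trace ≤ (M * 𝓘 * M).trace ∧
      ((M * 𝓘 * M).trace = c ^ 2 / (𝓘⁻¹).trace ↔ M = (c / (𝓘⁻¹).trace) • 𝓘⁻¹) := by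
  rintro M hM rfl
  set τ := (𝓘⁻¹).trace
  set N := M - (M.trace / τ) • 𝓘⁻¹
  have hN : Nᴴ = N := (hM.isHermitian.sub (h𝓘.inv.isHermitian.smul (.all _))).eq
  -- `τ = 0` happens for `d = 0`, where both sides are `0` by the convention `x / 0 = 0`
  have hscalar : -2 * (M.trace / τ) * M.trace + (M.trace / τ) ^ 2 * τ = -(M.trace ^ 2 / τ) := by
    rcases eq_or_ne τ 0 with hτ | hτ
    · simp [hτ]
    · field_simp; ring
  have hsplit : (M * 𝓘 * M).trace = (Nᴴ * 𝓘 * N).trace + M.trace ^ 2 / τ := by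
    rw [hN, trace_sub_smul_inv_mul_mul_sub_smul_inv ((isUnit_iff_isUnit_det 𝓘).mp h𝓘.isUnit)]
    linear_combination -hscalar
  have hnonneg : 0 ≤ (Nᴴ * 𝓘 * N).trace :=
    (h𝓘.posSemidef.conjTranspose_mul_mul_same N).trace_nonneg
  refine ⟨by linarith, ?_⟩
  rw [hsplit, add_eq_right, h𝓘.trace_conjTranspose_mul_mul_same_eq_zero_iff, sub_eq_zero]

/-- Optimality of the inverse Fisher matrix as preconditioner: for a symmetric
positive definite `𝓘` and any symmetric positive semidefinite `M` with
`tr(M) = c > 0`, one has `tr(M𝓘M) ≥ c²/tr(𝓘⁻¹)`, with equality if and only if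
`M = (c/tr(𝓘⁻¹)) 𝓘⁻¹`. -/
theorem inverse_fisher_optimal_preconditioner
    {d : ℕ} (𝓘 : Matrix (Fin d) (Fin d) ℝ) (h𝓘 : 𝓘.PosDef)
    (c : ℝ) (hc : 0 < c) :
    ∀ M : Matrix (Fin d) (Fin d) ℝ, M.PosSemidef → M.trace = c →
      c ^ 2 / (𝓘⁻¹).trace ≤ (M * 𝓘 * M).trace ∧
      ((M * 𝓘 * M).trace = c ^ 2 / (𝓘⁻¹).trace ↔ M = (c / (𝓘⁻¹).trace) • 𝓘⁻¹) :=
  inverse_fisher_optimal_preconditioner_general 𝓘 h𝓘 c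
end
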